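/- arXiv:2504.18390 — 2 statements merged into one kernel-verified Lean document; each statement's English description precedes it below -/
import Mathlib

section
/- Let X = Option (ZMod 125), writing ∞ for none, with ZMod 125 acting on X by translation (t • some x = some (x + t), t • ∞ = ∞). Let ℬ be the family of all translates of the five base blocks B1 = {0,1,3,15,47,74}, B2 = {0,4,9,20,65,103}, B3 = {0,6,40,88,95,112}, B4 = {0,8,18,41,76,104} (as subsets of X via some), and B5 = {0,25,50,75,100} ∪ {∞}. Then every block of ℬ has exactly 6 elements and every pair of distinct points of X is contained in exactly one block of ℬ; that is, ℬ is a Steiner system S(2,6,126) (a unital of order 5) on X, invariant under the translation action with the single fixed point ∞. -/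
/-!
The four full base blocks form a relative difference family in `ZMod 125` with respect to the
subgroup `H = {0, 25, 50, 75, 100}` of order 5 (the kernel of multiplication by 5): their 120
differences `y - x` run exactly once through the 120 elements outside `H`. A pair `{a, b}` of
finite points therefore lies in a translate of `H ∪ {∞}` when `b - a ∈ H`, and otherwise in the
translate of the unique base block realising the difference `b - a`; the pairs through `∞` lie
only in the cosets of `H` with `∞` adjoined.
-/

/-- Translation action of `ZMod 125` on `Option (ZMod 125)`:
`t • some x = some (x + t)`, `t • ∞ = ∞`. -/
def tr125 (t : ZMod 125) : Option (ZMod 125) → Option (ZMod 125) :=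
  Option.map (fun a => a + t)

/-- The five base blocks of the difference family. -/
def baseBlocks0 : List (Finset (Option (ZMod 125))) :=
  [ {some 0, some 1, some 3, some 15, some 47, some 74},
    {some 0, some 4, some 9, some 20, some 65, some 103},
    {some 0, some 6, some 40, some 88, some 95, some 112},
    {some 0, some 8, some 18, some 41, some 76, some 104},
    {some 0, some 25, some 50, some 75, some 100, none} ]

/-- The family of all translates of the base blocks. -/
def blocks0 : Set (Finset (Option (ZMod 125))) :=
  { B | ∃ t : ZMod 125, ∃ B0 ∈ baseBlocks0, B = B0.image (tr125 t) }

open Finset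

variable {G ι : Type*} [AddCommGroup G]

def optTranslate (t : G) : Option G → Option G := Option.map (· + t)

@[simp] lemma optTranslate_none (t : G) : optTranslate t none = none := rfl

@[simp] lemma optTranslate_some (t x : G) : optTranslate t (some x) = some (x + t) := rfl

lemma optTranslate_injective (t : G) : Function.Injective (optTranslate t) :=
  Option.map_injective (add_left_injective t)

lemma optTranslate_comp_optTranslate (s t : G) :
    optTranslate t ∘ optTranslate s = optTranslate (s + t) := by
  funext x
  cases x <;> simp [add_assoc]

lemma eq_none_of_optTranslate_eq_self {t : G} (ht : t ≠ 0) {x : Option G}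
    (hx : optTranslate t x = x) : x = none := by
  cases x with
  | none => rfl
  | some a => exact absurd (add_eq_left.mp (Option.some.inj hx)) ht

section RelDiffFamily

variable [Fintype G] [Fintype ι] (H : AddSubgroup G) [DecidablePred (· ∈ H)] (D : ι → Finset G)

/-- `D` is a relative difference family with `λ = 1` relative to `H`: the differences `y - x` of
distinct elements of a common block `D i` list every element outside `H` exactly once. -/
def IsRelDiffFamily : Prop :=
  (univ.sigma fun i => (D i).offDiag).val.map (fun p => p.2.2 - p.2.1) = (univ.filter (· ∉ H)).val

variable {H D}

namespace IsRelDiffFamily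

variable (hD : IsRelDiffFamily H D)
include hD

lemma exists_sub_eq {g : G} (hg : g ∉ H) : ∃ i, ∃ x ∈ D i, ∃ y ∈ D i, y - x = g := by
  have hmem : g ∈ (univ.filter (· ∉ H)).val := by simpa using hg
  rw [← hD] at hmem
  obtain ⟨⟨i, x, y⟩, hp, rfl⟩ := Multiset.mem_map.mp hmem
  simp only [Finset.mem_val, mem_sigma, mem_offDiag] at hp
  exact ⟨i, x, hp.2.1, y, hp.2.2.1, rfl⟩

lemma sub_notMem {i : ι} {x y : G} (hx : x ∈ D i) (hy : y ∈ D i) (hxy : x ≠ y) : y - x ∉ H := by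
  have hmem : y - x ∈ (univ.filter (· ∉ H)).val := by
    rw [← hD]
    exact Multiset.mem_map_of_mem (fun p : Σ _ : ι, G × G => p.2.2 - p.2.1)
      (show (⟨i, x, y⟩ : Σ _ : ι, G × G) ∈ (univ.sigma fun i => (D i).offDiag).val by
        simp [hx, hy, hxy])
  simpa using hmem

lemma eq_of_sub_eq {i j : ι} {x y x' y' : G} (hx : x ∈ D i) (hy : y ∈ D i) (hxy : x ≠ y)
    (hx' : x' ∈ D j) (hy' : y' ∈ D j) (hxy' : x' ≠ y') (h : y - x = y' - x') :
    i = j ∧ x = x' := by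
  have hnodup := hD ▸ (univ.filter (· ∉ H)).nodup
  have := Multiset.inj_on_of_nodup_map hnodup ⟨i, x, y⟩ (by simp [hx, hy, hxy])
    ⟨j, x', y'⟩ (by simp [hx', hy', hxy']) h
  simp only [Sigma.mk.inj_iff, heq_eq_eq, Prod.mk.injEq] at this
  exact ⟨this.1, this.2.1⟩

end IsRelDiffFamily

end RelDiffFamily

variable [DecidableEq G]

lemma some_mem_image_optTranslate {B : Finset (Option G)} {t a : G} :
    some a ∈ B.image (optTranslate t) ↔ some (a - t) ∈ B := by
  simpa using (optTranslate_injective t).mem_finset_image (a := some (a - t)) (s := B)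

lemma none_mem_image_optTranslate {B : Finset (Option G)} {t : G} :
    none ∈ B.image (optTranslate t) ↔ none ∈ B :=
  (optTranslate_injective t).mem_finset_image (a := none) (s := B)

def development (base : Set (Finset (Option G))) : Set (Finset (Option G)) :=
  {B | ∃ t, ∃ B₀ ∈ base, B = B₀.image (optTranslate t)}

section development

variable {base : Set (Finset (Option G))} {B : Finset (Option G)}

lemma image_optTranslate_mem_development (hB : B ∈ development base) (t : G) :
    B.image (optTranslate t) ∈ development base := by
  obtain ⟨s, B₀, hB₀, rfl⟩ := hB
  exact ⟨s + t, B₀, hB₀, by rw [image_image, optTranslate_comp_optTranslate]⟩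

lemma card_of_mem_development {k : ℕ} (hbase : ∀ B₀ ∈ base, B₀.card = k)
    (hB : B ∈ development base) : B.card = k := by
  obtain ⟨t, B₀, hB₀, rfl⟩ := hB
  rw [card_image_of_injective _ (optTranslate_injective t), hbase B₀ hB₀]

end development

lemma some_mem_image_fullBlock {A : Finset G} {t a : G} :
    some a ∈ (A.image some).image (optTranslate t) ↔ a - t ∈ A := by
  rw [some_mem_image_optTranslate]
  simp

lemma none_notMem_image_fullBlock (A : Finset G) (t : G) :
    none ∉ (A.image some).image (optTranslate t) := by
  rw [none_mem_image_optTranslate]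
  simp

section RelDiffBase

variable [Fintype G] (H : AddSubgroup G) [DecidablePred (· ∈ H)] (D : ι → Finset G)

def shortBlock : Finset (Option G) := insert none ((univ.filter (· ∈ H)).image some)

def relDiffBase : Set (Finset (Option G)) :=
  insert (shortBlock H) (Set.range fun i => (D i).image some)

variable {H D}

lemma some_mem_image_shortBlock {t a : G} :
    some a ∈ (shortBlock H).image (optTranslate t) ↔ a - t ∈ H := by
  rw [some_mem_image_optTranslate]
  simp [shortBlock]

lemma none_mem_image_shortBlock (t : G) : none ∈ (shortBlock H).image (optTranslate t) := by
  rw [none_mem_image_optTranslate]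
  exact mem_insert_self _ _

lemma image_shortBlock_eq {t a : G} (h : a - t ∈ H) :
    (shortBlock H).image (optTranslate t) = (shortBlock H).image (optTranslate a) := by
  ext x
  cases x with
  | none => simp only [none_mem_image_shortBlock]
  | some c =>
    rw [some_mem_image_shortBlock, some_mem_image_shortBlock, ← sub_add_sub_cancel c a t,
      H.add_mem_cancel_right h]

lemma mem_development_relDiffBase {B : Finset (Option G)} :
    B ∈ development (relDiffBase H D) ↔
      (∃ t, B = (shortBlock H).image (optTranslate t)) ∨
        ∃ i t, B = ((D i).image some).image (optTranslate t) := by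
  simp only [development, relDiffBase, Set.mem_ofPred_eq, Set.mem_insert_iff, Set.mem_range]
  constructor
  · rintro ⟨t, B₀, rfl | ⟨i, rfl⟩, rfl⟩
    exacts [.inl ⟨t, rfl⟩, .inr ⟨i, t, rfl⟩]
  · rintro (⟨t, rfl⟩ | ⟨i, t, rfl⟩)
    exacts [⟨t, _, .inl rfl, rfl⟩, ⟨t, _, .inr ⟨i, rfl⟩, rfl⟩]

lemma card_of_mem_relDiffBase {k : ℕ} (hD : ∀ i, (D i).card = k)
    (hH : (univ.filter (· ∈ H)).card + 1 = k) {B : Finset (Option G)} (hB : B ∈ relDiffBase H D) :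
    B.card = k := by
  rcases hB with rfl | ⟨i, rfl⟩
  · rw [shortBlock, card_insert_of_notMem (by simp),
      card_image_of_injective _ (Option.some_injective _), hH]
  · rw [card_image_of_injective _ (Option.some_injective _), hD]

lemma existsUnique_block_none_some (a : G) :
    ∃! B, B ∈ development (relDiffBase H D) ∧ none ∈ B ∧ some a ∈ B := by
  refine ⟨(shortBlock H).image (optTranslate a), ⟨mem_development_relDiffBase.mpr (.inl ⟨a, rfl⟩),
    none_mem_image_shortBlock a, some_mem_image_shortBlock.mpr (by simp)⟩, ?_⟩
  rintro B ⟨hB, hnone, ha⟩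
  rcases mem_development_relDiffBase.mp hB with ⟨t, rfl⟩ | ⟨i, t, rfl⟩
  · exact image_shortBlock_eq (some_mem_image_shortBlock.mp ha)
  · exact absurd hnone (none_notMem_image_fullBlock _ t)

variable [Fintype ι]

lemma IsRelDiffFamily.existsUnique_block_some_some (hD : IsRelDiffFamily H D) {a b : G}
    (hab : a ≠ b) : ∃! B, B ∈ development (relDiffBase H D) ∧ some a ∈ B ∧ some b ∈ B := by
  by_cases hH : b - a ∈ H
  · refine ⟨(shortBlock H).image (optTranslate a), ⟨mem_development_relDiffBase.mpr (.inl ⟨a, rfl⟩),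
      some_mem_image_shortBlock.mpr (by simp), some_mem_image_shortBlock.mpr hH⟩, ?_⟩
    rintro B ⟨hB, ha, hb⟩
    rcases mem_development_relDiffBase.mp hB with ⟨t, rfl⟩ | ⟨i, t, rfl⟩
    · exact image_shortBlock_eq (some_mem_image_shortBlock.mp ha)
    · rw [some_mem_image_fullBlock] at ha hb
      have := hD.sub_notMem ha hb (by simpa using hab)
      rw [sub_sub_sub_cancel_right] at this
      exact absurd hH this
  · obtain ⟨i, x, hx, y, hy, hxy⟩ := hD.exists_sub_eq hH
    have hxy' : x ≠ y := fun h => hH (by rw [← hxy, h, sub_self]; exact H.zero_mem)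
    refine ⟨((D i).image some).image (optTranslate (a - x)),
      ⟨mem_development_relDiffBase.mpr (.inr ⟨i, a - x, rfl⟩), ?_, ?_⟩, ?_⟩
    · rwa [some_mem_image_fullBlock, sub_sub_cancel]
    · rwa [some_mem_image_fullBlock, sub_sub_eq_add_sub, add_sub_right_comm, ← hxy,
        sub_add_cancel]
    rintro B ⟨hB, ha, hb⟩
    rcases mem_development_relDiffBase.mp hB with ⟨t, rfl⟩ | ⟨j, t, rfl⟩
    · rw [some_mem_image_shortBlock] at ha hb
      exact absurd (sub_sub_sub_cancel_right b a t ▸ H.sub_mem hb ha) hH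
    · rw [some_mem_image_fullBlock] at ha hb
      obtain ⟨rfl, hxt⟩ := hD.eq_of_sub_eq ha hb (by simpa using hab) hx hy hxy'
        (by rw [sub_sub_sub_cancel_right, hxy])
      rw [← hxt, sub_sub_cancel]

theorem IsRelDiffFamily.existsUnique_block (hD : IsRelDiffFamily H D) {p q : Option G}
    (hpq : p ≠ q) : ∃! B, B ∈ development (relDiffBase H D) ∧ p ∈ B ∧ q ∈ B := by
  cases p with
  | none =>
    cases q with
    | none => exact absurd rfl hpq
    | some b => exact existsUnique_block_none_some b
  | some a =>
    cases q with
    | none => simpa only [and_comm (a := some a ∈ _)] using existsUnique_block_none_some a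
    | some b => exact hD.existsUnique_block_some_some (Option.some_injective _ |>.ne_iff.mp hpq)

end RelDiffBase

def unitalDiffFamily : Fin 4 → Finset (ZMod 125) :=
  ![{0, 1, 3, 15, 47, 74}, {0, 4, 9, 20, 65, 103}, {0, 6, 40, 88, 95, 112}, {0, 8, 18, 41, 76, 104}]

set_option maxRecDepth 100000 in
lemma isRelDiffFamily_unitalDiffFamily :
    IsRelDiffFamily (AddMonoidHom.mulLeft (5 : ZMod 125)).ker unitalDiffFamily := by
  unfold IsRelDiffFamily
  decide

set_option maxRecDepth 10000 in
lemma baseBlocks0_eq :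
    baseBlocks0 = List.ofFn (fun i => (unitalDiffFamily i).image some) ++
      [shortBlock (AddMonoidHom.mulLeft (5 : ZMod 125)).ker] := by
  decide

lemma setOf_mem_baseBlocks0 :
    {B | B ∈ baseBlocks0} =
      relDiffBase (AddMonoidHom.mulLeft (5 : ZMod 125)).ker unitalDiffFamily := by
  ext B
  simp only [Set.mem_ofPred_eq, baseBlocks0_eq, List.mem_append, List.mem_ofFn',
    List.mem_singleton, relDiffBase, Set.mem_insert_iff, or_comm]

lemma blocks0_eq_development :
    blocks0 = development
      (relDiffBase (AddMonoidHom.mulLeft (5 : ZMod 125)).ker unitalDiffFamily) := by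
  rw [← setOf_mem_baseBlocks0]
  rfl

theorem unital_Z125_design1 :
    (∀ B ∈ blocks0, B.card = 6) ∧
    (∀ p q : Option (ZMod 125), p ≠ q →
      ∃! B, B ∈ blocks0 ∧ p ∈ B ∧ q ∈ B) ∧
    (∀ t : ZMod 125, ∀ B ∈ blocks0, B.image (tr125 t) ∈ blocks0) ∧
    (∀ t : ZMod 125, tr125 t none = none) ∧
    (∀ t : ZMod 125, t ≠ 0 → ∀ x : Option (ZMod 125), tr125 t x = x → x = none) := by
  rw [blocks0_eq_development]
  refine ⟨fun B => card_of_mem_development fun B₀ =>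
      card_of_mem_relDiffBase (by decide) (by decide),
    fun p q => isRelDiffFamily_unitalDiffFamily.existsUnique_block,
    fun t B hB => image_optTranslate_mem_development hB t, fun t => rfl,
    fun t ht x => eq_none_of_optTranslate_eq_self ht⟩
end

section
/- Let G = DihedralGroup 63 (the dihedral group D126 of order 126). There is no family ℬ of 6-element finite subsets of G that is invariant under left translation and such that every pair of distinct elements of G is contained in exactly one member of ℬ. In other words, no Steiner system S(2,6,126) (unital of order 5) admits a point-transitive and effective action of D126. -/
/-!
Every reflection `s` is an involution, so the block through `1` and `s` is mapped to itself by
`s`. If two reflections `s ≠ t` lie in one block `B` through `1`, then `B` is stabilised by the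
rotation `s * t`, hence contains the cyclic group it generates. As `|B| = 6` and rotations have
order dividing `63`, that rotation has order `3`, so `B` is the block through `1` and `r 21`.
Hence the `63` reflections meet distinct blocks through `1`, except for at most `6` of them,
which forces more than `25` blocks through `1`; but these blocks are disjoint away from `1`,
so there are only `125 / 5 = 25` of them.
-/

open Finset Pointwise MulAction DihedralGroup

variable {X : Type*}

/-- Steiner system `S(2, k, |X|)`. -/
structure IsSteinerSystem (k : ℕ) (ℬ : Set (Finset X)) : Prop where
  card_eq : ∀ B ∈ ℬ, #B = k
  existsUnique : ∀ p q : X, p ≠ q → ∃! B, B ∈ ℬ ∧ p ∈ B ∧ q ∈ B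

namespace IsSteinerSystem

variable {k : ℕ} {ℬ : Set (Finset X)}

theorem eq_of_mem (hS : IsSteinerSystem k ℬ) {p q : X} (hpq : p ≠ q) {B B' : Finset X}
    (hB : B ∈ ℬ) (hp : p ∈ B) (hq : q ∈ B) (hB' : B' ∈ ℬ) (hp' : p ∈ B') (hq' : q ∈ B') :
    B = B' :=
  (hS.existsUnique p q hpq).unique ⟨hB, hp, hq⟩ ⟨hB', hp', hq'⟩

theorem card_mul_pred_add_one_le [Fintype X] [DecidableEq X] (hS : IsSteinerSystem k ℬ)
    {p : X} {T : Finset (Finset X)} (hT : ∀ B ∈ T, B ∈ ℬ ∧ p ∈ B) :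
    #T * (k - 1) + 1 ≤ Fintype.card X := by
  have hdisj : (T : Set (Finset X)).PairwiseDisjoint (·.erase p) := by
    intro B hB B' hB' hne
    refine disjoint_left.mpr fun x hx hx' => hne ?_
    exact hS.eq_of_mem (ne_of_mem_erase hx).symm (hT B hB).1 (hT B hB).2 (mem_of_mem_erase hx)
      (hT B' hB').1 (hT B' hB').2 (mem_of_mem_erase hx')
  have hunion : #(T.biUnion (·.erase p)) = #T * (k - 1) := by
    rw [card_biUnion hdisj, sum_congr rfl fun B hB => by
      rw [card_erase_of_mem (hT B hB).2, hS.card_eq B (hT B hB).1], sum_const, smul_eq_mul]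
  have hsub : T.biUnion (·.erase p) ⊆ univ.erase p :=
    biUnion_subset.mpr fun B _ => erase_subset_erase p (subset_univ B)
  have hle := card_le_card hsub
  rw [hunion, card_erase_of_mem (mem_univ p), card_univ] at hle
  have : 0 < Fintype.card X := Fintype.card_pos_iff.mpr ⟨p⟩
  omega

end IsSteinerSystem

theorem Finset.card_le_card_image_add_card_filter {α β : Type*} [DecidableEq β] (s : Finset α)
    (f : α → β) (b : β) (hf : ∀ x ∈ s, ∀ y ∈ s, f x = f y → f x ≠ b → x = y) :
    #s ≤ #(s.image f) + #(s.filter (f · = b)) := by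
  have hinj : Set.InjOn f (s.filter (¬ f · = b)) := fun x hx y hy hxy =>
    hf x (mem_filter.mp hx).1 y (mem_filter.mp hy).1 hxy (mem_filter.mp hx).2
  have himage : #(s.filter (¬ f · = b)) ≤ #(s.image f) := by
    rw [← card_image_of_injOn hinj]
    exact card_le_card (image_subset_image (filter_subset _ s))
  have := card_filter_add_card_filter_not (s := s) (p := (f · = b))
  omega

section LeftInvariant

variable {G : Type*} [Group G] [DecidableEq G] {B : Finset G} {g : G}

theorem mem_of_mem_stabilizer (h1 : 1 ∈ B) (hg : g ∈ stabilizer G B) : g ∈ B := by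
  simpa [mem_stabilizer_iff.mp hg] using smul_mem_smul_finset (a := g) h1

theorem orderOf_le_card_of_mem_stabilizer (h1 : 1 ∈ B) (hg : g ∈ stabilizer G B) :
    orderOf g ≤ #B := by
  have hsub : (Subgroup.zpowers g : Set G) ⊆ B := fun x hx =>
    mem_of_mem_stabilizer h1 ((Subgroup.zpowers_le.mpr hg) hx)
  rw [← Nat.card_zpowers, ← SetLike.coe_sort_coe, Nat.card_coe_set_eq, ← Set.ncard_coe_finset]
  exact Set.ncard_le_ncard hsub

variable {k : ℕ} {ℬ : Set (Finset G)}

theorem IsSteinerSystem.mem_stabilizer (hS : IsSteinerSystem k ℬ)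
    (hinv : ∀ g : G, ∀ B ∈ ℬ, g • B ∈ ℬ) (hB : B ∈ ℬ) {a b : G} (hab : a ≠ b) (ha : a ∈ B)
    (hb : b ∈ B) (hga : g * a ∈ B) (hgb : g * b ∈ B) : g ∈ stabilizer G B :=
  hS.eq_of_mem (mul_left_cancel_iff.not.mpr hab) (hinv g B hB) (smul_mem_smul_finset ha)
    (smul_mem_smul_finset hb) hB hga hgb

theorem IsSteinerSystem.mem_stabilizer_of_mul_self_eq_one (hS : IsSteinerSystem k ℬ)
    (hinv : ∀ g : G, ∀ B ∈ ℬ, g • B ∈ ℬ) (hB : B ∈ ℬ) (h1 : 1 ∈ B) (hg : g ∈ B)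
    (hgg : g * g = 1) : g ∈ stabilizer G B := by
  by_cases hg1 : g = 1
  · exact hg1 ▸ one_mem _
  · exact hS.mem_stabilizer hinv hB (Ne.symm hg1) h1 hg (by rwa [mul_one]) (by rwa [hgg])

end LeftInvariant

theorem DihedralGroup.r_21_mem_zpowers {d : ZMod 63} (hd : d ≠ 0) (h : orderOf (r d) ≤ 6) :
    r 21 ∈ Subgroup.zpowers (r d) := by
  rw [orderOf_r] at h
  have : d = 21 ∨ d = 42 := by
    revert d
    decide
  rcases this with rfl | rfl
  · exact Subgroup.mem_zpowers _
  · exact ⟨2, show r 42 ^ (2 : ℤ) = r 21 by rw [r_zpow]; decide⟩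

theorem IsSteinerSystem.r_21_mem_of_sr_mem {ℬ : Set (Finset (DihedralGroup 63))}
    (hS : IsSteinerSystem 6 ℬ) (hinv : ∀ g : DihedralGroup 63, ∀ B ∈ ℬ, g • B ∈ ℬ)
    {B : Finset (DihedralGroup 63)} (hB : B ∈ ℬ) (h1 : 1 ∈ B) {i j : ZMod 63} (hij : i ≠ j)
    (hi : sr i ∈ B) (hj : sr j ∈ B) : r 21 ∈ B := by
  have hrot : r (j - i) ∈ stabilizer _ B := by
    rw [← sr_mul_sr]
    exact mul_mem (hS.mem_stabilizer_of_mul_self_eq_one hinv hB h1 hi (sr_mul_self i))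
      (hS.mem_stabilizer_of_mul_self_eq_one hinv hB h1 hj (sr_mul_self j))
  have horder := orderOf_le_card_of_mem_stabilizer h1 hrot
  rw [hS.card_eq B hB] at horder
  exact mem_of_mem_stabilizer h1 <| Subgroup.zpowers_le.mpr hrot <|
    r_21_mem_zpowers (sub_ne_zero.mpr hij.symm) horder

/-- No Steiner system `S(2,6,126)` admits a point-transitive and effective action of
the dihedral group `D126 = DihedralGroup 63` of order 126: there is no family of
6-element blocks on `D126`, invariant under left translation, in which every pair of
distinct points lies in exactly one block. -/
theorem no_unital_D126 :
    ¬ ∃ ℬ : Set (Finset (DihedralGroup 63)),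
        (∀ B ∈ ℬ, B.card = 6) ∧
        (∀ g : DihedralGroup 63, ∀ B ∈ ℬ, B.image (fun x => g * x) ∈ ℬ) ∧
        (∀ p q : DihedralGroup 63, p ≠ q → ∃! B, B ∈ ℬ ∧ p ∈ B ∧ q ∈ B) := by
  rintro ⟨ℬ, hcard, hinv, hpair⟩
  have hS : IsSteinerSystem 6 ℬ := ⟨hcard, hpair⟩
  choose f hf using fun i : ZMod 63 => (hpair 1 (sr i) (by rw [one_def]; nofun)).exists
  obtain ⟨B₀, ⟨hB₀, h1B₀, h21B₀⟩, -⟩ := hpair 1 (r 21) (by decide)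
  have hcollide : ∀ i ∈ univ, ∀ j ∈ univ, f i = f j → f i ≠ B₀ → i = j := by
    intro i _ j _ hfij hne
    by_contra hij
    have h21 := hS.r_21_mem_of_sr_mem hinv (hf i).1 (hf i).2.1 hij (hf i).2.2 (hfij ▸ (hf j).2.2)
    exact hne (hS.eq_of_mem (by decide) (hf i).1 (hf i).2.1 h21 hB₀ h1B₀ h21B₀)
  have hblocks := hS.card_mul_pred_add_one_le (p := 1) (T := univ.image f) fun B hB => by
    obtain ⟨i, -, rfl⟩ := mem_image.mp hB
    exact ⟨(hf i).1, (hf i).2.1⟩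
  have hfiber : #(univ.filter (f · = B₀)) ≤ #B₀ :=
    card_le_card_of_injOn sr (fun i hi => (mem_filter.mp hi).2 ▸ (hf i).2.2) fun _ _ _ _ => sr.inj
  have := card_le_card_image_add_card_filter univ f B₀ hcollide
  rw [hS.card_eq B₀ hB₀] at hfiber
  rw [DihedralGroup.card] at hblocks
  simp only [card_univ, ZMod.card] at this
  omega
end
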